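/- Define g(x) = (x(x+1)/(x-1)²)·ln((x+1)²/(4x)) and h(x) = 2x/(x+1) for x ∈ (1,∞). Then there exists a unique ã ∈ (1,∞) such that g(x) < h(x) for 1 < x < ã, g(ã) = h(ã), and g(x) > h(x) for x > ã. Moreover ã > 3 + 2√2. -/

import Mathlib

/-!
Writing `k(x) = 2(x-1)²/(x+1)² - 2 ln(x+1) + ln(4x)`, one has
`g(x) - h(x) = -(x(x+1)/(x-1)²) k(x)` on `(1, ∞)`, so `g < h` exactly where `k > 0`.
Since `k'(x) = -(x-1)(x²-6x+1)/(x(x+1)³)`, the function `k` increases on `[1, 3+2√2]` from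
`k(1) = 0` and then decreases to negative values, so it has exactly one zero `ã > 3+2√2`,
positive before it and negative after it.
-/

open Real Set

noncomputable section

/-- `g(x) = (x(x+1)/(x-1)²)·ln((x+1)²/(4x))`. -/
def gFun (x : ℝ) : ℝ := (x * (x + 1) / (x - 1) ^ 2) * Real.log ((x + 1) ^ 2 / (4 * x))

/-- `h(x) = 2x/(x+1)`. -/
def hFun (x : ℝ) : ℝ := 2 * x / (x + 1)

theorem exists_zero_pos_before_neg_after {k : ℝ → ℝ} {a b c : ℝ} (hac : a < c) (hcb : c < b)
    (hcont : ContinuousOn k (Icc c b)) (hmono : StrictMonoOn k (Icc a c))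
    (hanti : StrictAntiOn k (Ici c)) (ha : k a = 0) (hb : k b < 0) :
    ∃ z, c < z ∧ (∀ x, a < x → x < z → 0 < k x) ∧ k z = 0 ∧ ∀ x, z < x → k x < 0 := by
  have hc : 0 < k c := ha ▸ hmono (left_mem_Icc.2 hac.le) (right_mem_Icc.2 hac.le) hac
  obtain ⟨z, ⟨hcz, -⟩, hz⟩ := intermediate_value_Icc' hcb.le hcont ⟨hb.le, hc.le⟩
  have hcz : c < z := hcz.lt_of_ne (by rintro rfl; linarith)
  refine ⟨z, hcz, fun x hax hxz => ?_, hz, fun x hzx => ?_⟩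
  · rcases le_or_gt x c with hxc | hcx
    · exact ha ▸ hmono (left_mem_Icc.2 hac.le) ⟨hax.le, hxc⟩ hax
    · exact hz ▸ hanti hcx.le hcz.le hxz
  · exact hz ▸ hanti hcz.le (hcz.trans hzx).le hzx

def kFun (x : ℝ) : ℝ := 2 * (x - 1) ^ 2 / (x + 1) ^ 2 - 2 * log (x + 1) + log (4 * x)

lemma gFun_sub_hFun {x : ℝ} (hx : 1 < x) :
    gFun x - hFun x = -(x * (x + 1) / (x - 1) ^ 2) * kFun x := by
  have hx₁ : x - 1 ≠ 0 := by linarith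
  have hx₂ : x + 1 ≠ 0 := by linarith
  rw [gFun, hFun, kFun, log_div (by positivity) (by positivity), log_pow]
  field_simp
  ring

lemma mul_add_one_div_sub_one_sq_pos {x : ℝ} (hx : 1 < x) : 0 < x * (x + 1) / (x - 1) ^ 2 := by
  have : 0 < x - 1 := by linarith
  positivity

lemma gFun_lt_hFun_iff {x : ℝ} (hx : 1 < x) : gFun x < hFun x ↔ 0 < kFun x := by
  have hw := mul_add_one_div_sub_one_sq_pos hx
  rw [← sub_neg, gFun_sub_hFun hx, neg_mul, neg_lt_zero, mul_pos_iff_of_pos_left hw]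

lemma hFun_lt_gFun_iff {x : ℝ} (hx : 1 < x) : hFun x < gFun x ↔ kFun x < 0 := by
  have hw := mul_add_one_div_sub_one_sq_pos hx
  rw [← sub_pos, gFun_sub_hFun hx, neg_mul, neg_pos]
  exact ⟨(neg_of_mul_neg_right · hw.le), mul_neg_of_pos_of_neg hw⟩

lemma gFun_eq_hFun_iff {x : ℝ} (hx : 1 < x) : gFun x = hFun x ↔ kFun x = 0 := by
  rw [← sub_eq_zero, gFun_sub_hFun hx, neg_mul, neg_eq_zero, mul_eq_zero,
    or_iff_right (mul_add_one_div_sub_one_sq_pos hx).ne']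

lemma kFun_one : kFun 1 = 0 := by
  rw [kFun, show (4 : ℝ) * 1 = (1 + 1) ^ 2 by norm_num, log_pow]
  norm_num

lemma hasDerivAt_kFun {x : ℝ} (hx : 0 < x) :
    HasDerivAt kFun (-(x - 1) * (x ^ 2 - 6 * x + 1) / (x * (x + 1) ^ 3)) x := by
  have hx1 : x + 1 ≠ 0 := by positivity
  have hquot := ((((hasDerivAt_id x).sub_const 1).pow 2).const_mul 2).div
    (((hasDerivAt_id x).add_const 1).pow 2) (pow_ne_zero 2 hx1)
  have hlog₁ := ((hasDerivAt_id x).add_const 1).log hx1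
  have hlog₂ := ((hasDerivAt_id x).const_mul 4).log (by positivity)
  refine ((hquot.sub (hlog₁.const_mul 2)).add hlog₂).congr_deriv ?_
  simp only [id, Pi.pow_apply]
  field_simp
  ring

lemma continuousOn_kFun : ContinuousOn kFun (Ioi 0) :=
  fun _ hx => (hasDerivAt_kFun hx).continuousAt.continuousWithinAt

lemma strictMonoOn_kFun : StrictMonoOn kFun (Icc 1 (3 + 2 * √2)) := by
  have hsq := sq_sqrt (zero_le_two : (0 : ℝ) ≤ 2)
  have hs : 1 < √2 := by nlinarith [sqrt_nonneg 2]
  refine strictMonoOn_of_deriv_pos (convex_Icc _ _)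
    (continuousOn_kFun.mono fun _ hx => one_pos.trans_le hx.1) fun x hx => ?_
  rw [interior_Icc] at hx
  obtain ⟨hx1, hxc⟩ := hx
  -- `x² - 6x + 1 = (x - (3 + 2√2)) (x - (3 - 2√2))` and `3 - 2√2 < 1`
  have hquad : x ^ 2 - 6 * x + 1 < 0 := by
    nlinarith [mul_pos (sub_pos.2 hxc) (show 0 < x - (3 - 2 * √2) by linarith)]
  rw [(hasDerivAt_kFun (by linarith)).deriv]
  exact div_pos (by nlinarith) (by positivity)

lemma strictAntiOn_kFun : StrictAntiOn kFun (Ici (3 + 2 * √2)) := by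
  have hsq := sq_sqrt (zero_le_two : (0 : ℝ) ≤ 2)
  have hs : 0 ≤ √2 := sqrt_nonneg 2
  refine strictAntiOn_of_deriv_neg (convex_Ici _)
    (continuousOn_kFun.mono fun _ hx => (by positivity : (0 : ℝ) < 3 + 2 * √2).trans_le hx)
    fun x hx => ?_
  rw [interior_Ici, mem_Ioi] at hx
  have hx0 : 0 < x := by linarith
  have hquad : 0 < x ^ 2 - 6 * x + 1 := by nlinarith
  rw [(hasDerivAt_kFun hx0).deriv]
  exact div_neg_of_neg_of_pos (by nlinarith) (by positivity)

-- The first term of `kFun` is below `2` and `log (x + 1) > log x`, so `kFun x < 2 - log (x / 4)`,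
-- which vanishes at `x = 4e²`.
lemma kFun_four_mul_exp_two_neg : kFun (4 * exp 2) < 0 := by
  set x := 4 * exp 2 with hx
  have hx0 : 0 < x := by positivity
  have hfrac : 2 * (x - 1) ^ 2 / (x + 1) ^ 2 < 2 := by
    rw [div_lt_iff₀ (by positivity)]
    nlinarith
  have hlog : log x < log (x + 1) := log_lt_log hx0 (lt_add_one x)
  have hlog4x : log (4 * x) = log 4 + log x := log_mul (by norm_num) hx0.ne'
  have hlogx : log x = log 4 + 2 := by rw [hx, log_mul (by norm_num) (exp_pos 2).ne', log_exp]
  rw [kFun]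
  linarith

/-- (Lemma 5.2) There is a unique `ã ∈ (1, ∞)` such that `g < h` on `(1, ã)`,
`g(ã) = h(ã)` and `g > h` on `(ã, ∞)`; moreover `ã > 3 + 2√2`. -/
theorem exists_unique_crossing_point :
    ∃! a : ℝ, 1 < a ∧ 3 + 2 * Real.sqrt 2 < a ∧
      (∀ x : ℝ, 1 < x → x < a → gFun x < hFun x) ∧
      gFun a = hFun a ∧
      (∀ x : ℝ, a < x → hFun x < gFun x) := by
  have hs₀ : 0 ≤ √2 := sqrt_nonneg 2
  have hs : √2 < 2 := by nlinarith [sq_sqrt (zero_le_two : (0 : ℝ) ≤ 2)]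
  have hcb : 3 + 2 * √2 < 4 * exp 2 := by nlinarith [add_one_lt_exp (two_ne_zero : (2 : ℝ) ≠ 0)]
  obtain ⟨a, hca, hpos, hzero, hneg⟩ := exists_zero_pos_before_neg_after
    (by linarith) hcb
    (continuousOn_kFun.mono fun _ hx => (by positivity : (0 : ℝ) < 3 + 2 * √2).trans_le hx.1)
    strictMonoOn_kFun strictAntiOn_kFun kFun_one kFun_four_mul_exp_two_neg
  have ha : 1 < a := by linarith
  refine ⟨a, ⟨ha, hca, fun x hx hxa => (gFun_lt_hFun_iff hx).2 (hpos x hx hxa),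
    (gFun_eq_hFun_iff ha).2 hzero,
    fun x hax => (hFun_lt_gFun_iff (ha.trans hax)).2 (hneg x hax)⟩, ?_⟩
  rintro y ⟨hy, hcy, -, hyeq, -⟩
  exact strictAntiOn_kFun.injOn hcy.le hca.le (by rw [(gFun_eq_hFun_iff hy).1 hyeq, hzero])
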